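/- arXiv:2502.19764 — 6 statements merged into one kernel-verified Lean document; each statement's English description precedes it below -/
import Mathlib

section
/- Let F : R^n → R be μ-strongly convex and differentiable, C ⊆ R^n a closed convex set, and x* the minimizer of F over C. If a point x ∈ C satisfies dist(-∇F(x), N_C(x)) ≤ ε (i.e., there exists v with ‖v‖ ≤ ε and ξ ∈ N_C(x) with ∇F(x) = -ξ - v), then F(x) - F(x*) ≤ ε²/(2μ). -/
open scoped RealInnerProductSpace

/-- If `F` is `μ`-strongly convex, `x*` minimizes `F` over the closed convex set `C`, and
`x ∈ C` satisfies `dist(-∇F(x), N_C(x)) ≤ ε`, then `F x - F x* ≤ ε² / (2μ)`. -/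
theorem strongly_convex_near_stationary_suboptimality
    {n : ℕ} (F : EuclideanSpace ℝ (Fin n) → ℝ)
    (F' : EuclideanSpace ℝ (Fin n) → EuclideanSpace ℝ (Fin n))
    (C : Set (EuclideanSpace ℝ (Fin n))) (hCclosed : IsClosed C) (hCconv : Convex ℝ C)
    (μ : ℝ) (hμ : 0 < μ)
    (hdiff : ∀ x, HasGradientAt F (F' x) x)
    (hsc : ∀ x x', F x ≥ F x' + ⟪F' x', x - x'⟫ + μ / 2 * ‖x - x'‖ ^ 2)
    (xstar : EuclideanSpace ℝ (Fin n)) (hxstar : xstar ∈ C)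
    (hmin : ∀ y ∈ C, F xstar ≤ F y)
    (x : EuclideanSpace ℝ (Fin n)) (hx : x ∈ C)
    (ε : ℝ) (v ξ : EuclideanSpace ℝ (Fin n))
    (hv : ‖v‖ ≤ ε)
    (hξ : ∀ y ∈ C, ⟪ξ, y - x⟫ ≤ 0)
    (heq : F' x = -ξ - v) :
    F x - F xstar ≤ ε ^ 2 / (2 * μ) := by
  have h1 := hsc xstar x
  have h2 := hξ xstar hxstar
  rw [heq] at h1
  have hinner : ⟪-ξ - v, xstar - x⟫ = -⟪ξ, xstar - x⟫ - ⟪v, xstar - x⟫ := by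
    rw [inner_sub_left, inner_neg_left]
  have hcs : ⟪v, xstar - x⟫ ≤ ε * ‖xstar - x‖ := by
    have := abs_real_inner_le_norm v (xstar - x)
    have h3 : ‖v‖ * ‖xstar - x‖ ≤ ε * ‖xstar - x‖ :=
      mul_le_mul_of_nonneg_right hv (norm_nonneg _)
    nlinarith [abs_le.mp this]
  have hε : 0 ≤ ε := le_trans (norm_nonneg v) hv
  have key : ε * ‖xstar - x‖ - μ / 2 * ‖xstar - x‖ ^ 2 ≤ ε ^ 2 / (2 * μ) := by
    rw [le_div_iff₀ (by positivity : (0:ℝ) < 2 * μ)]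
    nlinarith [sq_nonneg (μ * ‖xstar - x‖ - ε)]
  linarith
end

section
/- Let f : R^n → R be differentiable and L-smooth, p > L, and C ⊆ R^n compact convex. For z ∈ C let x(z) := argmin_{x ∈ C} [f(x) + (p/2)‖x - z‖²]. Then for any z, z' ∈ C, ‖x(z) - x(z')‖ ≤ (p/(p-L))‖z - z'‖. -/
open scoped RealInnerProductSpace

/-- Descent-type bound from an `L`-Lipschitz gradient. -/
lemma taylor_upper {n : ℕ} (f : EuclideanSpace ℝ (Fin n) → ℝ)
    (f' : EuclideanSpace ℝ (Fin n) → EuclideanSpace ℝ (Fin n))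
    (L : ℝ) (hL : 0 ≤ L)
    (hdiff : ∀ x, HasGradientAt f (f' x) x)
    (hlip : ∀ x x', ‖f' x - f' x'‖ ≤ L * ‖x - x'‖)
    (x y : EuclideanSpace ℝ (Fin n)) :
    f y ≤ f x + ⟪f' x, y - x⟫ + L * ‖y - x‖ ^ 2 := by
  have key : ‖f y - f x - ((InnerProductSpace.toDual ℝ _) (f' x)) (y - x)‖
      ≤ (L * ‖y - x‖) * ‖y - x‖ := by
    apply Convex.norm_image_sub_le_of_norm_hasFDerivWithin_le'
      (f' := fun z => (InnerProductSpace.toDual ℝ _) (f' z)) (s := segment ℝ x y)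
    · intro z _
      exact ((hdiff z).hasFDerivAt).hasFDerivWithinAt
    · intro z hz
      have h1 : ‖(InnerProductSpace.toDual ℝ _) (f' z) - (InnerProductSpace.toDual ℝ _) (f' x)‖
          = ‖f' z - f' x‖ := by
        rw [← map_sub]
        exact (InnerProductSpace.toDual ℝ _).norm_map _
      rw [h1]
      have h2 : ‖z - x‖ ≤ ‖y - x‖ := by
        have := dist_add_dist_of_mem_segment hz
        have h3 : dist x z ≤ dist x y := by linarith [dist_nonneg (x := z) (y := y)]
        simpa [dist_eq_norm, norm_sub_rev] using h3
      calc ‖f' z - f' x‖ ≤ L * ‖z - x‖ := hlip z x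
        _ ≤ L * ‖y - x‖ := mul_le_mul_of_nonneg_left h2 hL
    · exact convex_segment x y
    · exact left_mem_segment ℝ x y
    · exact right_mem_segment ℝ x y
  have habs := abs_le.mp ((Real.norm_eq_abs _) ▸ key)
  have hdual : ((InnerProductSpace.toDual ℝ _) (f' x)) (y - x) = ⟪f' x, y - x⟫ := rfl
  rw [hdual] at habs
  nlinarith [habs.2, sq_nonneg (‖y - x‖)]

/-- First-order optimality condition for the constrained minimizer. -/
lemma first_order_opt {n : ℕ} (f : EuclideanSpace ℝ (Fin n) → ℝ)
    (f' : EuclideanSpace ℝ (Fin n) → EuclideanSpace ℝ (Fin n))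
    (L p : ℝ) (hL : 0 ≤ L) (hp : L < p)
    (C : Set (EuclideanSpace ℝ (Fin n))) (hCconv : Convex ℝ C)
    (hdiff : ∀ x, HasGradientAt f (f' x) x)
    (hlip : ∀ x x', ‖f' x - f' x'‖ ≤ L * ‖x - x'‖)
    (z x : EuclideanSpace ℝ (Fin n)) (hxC : x ∈ C)
    (hmin : ∀ u ∈ C, f x + p / 2 * ‖x - z‖ ^ 2 ≤ f u + p / 2 * ‖u - z‖ ^ 2)
    (u : EuclideanSpace ℝ (Fin n)) (hu : u ∈ C) :
    0 ≤ ⟪f' x, u - x⟫ + p * ⟪x - z, u - x⟫ := by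
  set d : EuclideanSpace ℝ (Fin n) := u - x with hd
  set A : ℝ := ⟪f' x, d⟫ + p * ⟪x - z, d⟫ with hA
  set K : ℝ := (L + p) * ‖d‖ ^ 2 with hK
  have hK0 : 0 ≤ K := by
    have : (0:ℝ) ≤ L + p := by linarith
    positivity
  have key : ∀ t : ℝ, 0 < t → t ≤ 1 → 0 ≤ A + t * K := by
    intro t ht0 ht1
    have hmem : x + t • d ∈ C := by
      have heq : x + t • d = (1 - t) • x + t • u := by
        rw [hd]; module
      rw [heq]
      exact hCconv hxC hu (by linarith) (le_of_lt ht0) (by ring)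
    have h1 := hmin _ hmem
    have h2 := taylor_upper f f' L hL hdiff hlip x (x + t • d)
    have hsimp : (x + t • d) - x = t • d := by abel
    rw [hsimp] at h2
    have hinner : ⟪f' x, t • d⟫ = t * ⟪f' x, d⟫ := real_inner_smul_right _ _ _
    have hnorm : ‖t • d‖ ^ 2 = t ^ 2 * ‖d‖ ^ 2 := by
      rw [norm_smul]
      simp [mul_pow, abs_of_pos ht0]
    have hexp : ‖(x + t • d) - z‖ ^ 2 = ‖x - z‖ ^ 2 + 2 * (t * ⟪x - z, d⟫) + t ^ 2 * ‖d‖ ^ 2 := by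
      have h3 : (x + t • d) - z = (x - z) + t • d := by abel
      rw [h3, ← real_inner_self_eq_norm_sq, ← real_inner_self_eq_norm_sq,
        ← real_inner_self_eq_norm_sq, inner_add_add_self]
      simp only [real_inner_smul_left, real_inner_smul_right]
      rw [real_inner_comm d (x - z)]
      ring
    rw [hinner, hnorm] at h2
    rw [hexp] at h1
    have h5 : 0 ≤ t * (A + t * K) := by
      rw [hA, hK]
      nlinarith
    exact nonneg_of_mul_nonneg_right h5 ht0
  by_contra hneg
  push_neg at hneg
  set t : ℝ := min 1 ((-A) / (K + 1)) with htdef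
  have hApos : 0 < -A := by linarith
  have ht0 : 0 < t := lt_min one_pos (div_pos hApos (by linarith))
  have ht1 : t ≤ 1 := min_le_left _ _
  have h6 := key t ht0 ht1
  have h7 : t * K ≤ (-A) / (K + 1) * K :=
    mul_le_mul_of_nonneg_right (min_le_right _ _) hK0
  have h8 : (-A) / (K + 1) * K < -A := by
    rw [div_mul_eq_mul_div, div_lt_iff₀ (by linarith : (0:ℝ) < K + 1)]
    nlinarith
  linarith

/-- Lipschitz continuity of the proximal map `x(z) = argmin_{x ∈ C} [f(x) + (p/2)‖x - z‖²]`: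
for `f` `L`-smooth and `p > L`, `‖x(z) - x(z')‖ ≤ (p/(p-L))‖z - z'‖`. -/
theorem prox_map_lipschitz
    {n : ℕ} (f : EuclideanSpace ℝ (Fin n) → ℝ)
    (f' : EuclideanSpace ℝ (Fin n) → EuclideanSpace ℝ (Fin n))
    (L p : ℝ) (hL : 0 ≤ L) (hp : L < p)
    (C : Set (EuclideanSpace ℝ (Fin n))) (hCcompact : IsCompact C) (hCconv : Convex ℝ C)
    (hdiff : ∀ x, HasGradientAt f (f' x) x)
    (hlip : ∀ x x', ‖f' x - f' x'‖ ≤ L * ‖x - x'‖)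
    (xz : EuclideanSpace ℝ (Fin n) → EuclideanSpace ℝ (Fin n))
    (hxz : ∀ z, xz z ∈ C ∧
      ∀ u ∈ C, f (xz z) + p / 2 * ‖xz z - z‖ ^ 2 ≤ f u + p / 2 * ‖u - z‖ ^ 2) :
    ∀ z ∈ C, ∀ z' ∈ C, ‖xz z - xz z'‖ ≤ p / (p - L) * ‖z - z'‖ := by
  intro z _ z' _
  set x := xz z with hx
  set x' := xz z' with hx'
  have h1 := first_order_opt f f' L p hL hp C hCconv hdiff hlip z x (hxz z).1 (hxz z).2
    x' (hxz z').1
  have h2 := first_order_opt f f' L p hL hp C hCconv hdiff hlip z' x' (hxz z').1 (hxz z').2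
    x (hxz z).1
  have e1 : (x - x') = -(x' - x) := by abel
  have hsum : 0 ≤ ⟪f' x - f' x', x' - x⟫ + p * ⟪(x - z) - (x' - z'), x' - x⟫ := by
    have hr1 : ⟪f' x', x - x'⟫ = -⟪f' x', x' - x⟫ := by
      rw [e1, inner_neg_right]
    have hr2 : ⟪x' - z', x - x'⟫ = -⟪x' - z', x' - x⟫ := by
      rw [e1, inner_neg_right]
    rw [hr1, hr2] at h2
    rw [inner_sub_left, inner_sub_left]
    linarith
  have hexp : ⟪(x - z) - (x' - z'), x' - x⟫
      = -‖x - x'‖ ^ 2 + ⟪z - z', x - x'⟫ := by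
    have e2 : (x - z) - (x' - z') = (x - x') - (z - z') := by abel
    have e3 : x' - x = -(x - x') := by abel
    rw [e2, inner_sub_left, e3, inner_neg_right, inner_neg_right,
      real_inner_self_eq_norm_sq]
    ring
  have hcs1 : ⟪f' x - f' x', x' - x⟫ ≤ L * ‖x - x'‖ ^ 2 := by
    calc ⟪f' x - f' x', x' - x⟫ ≤ ‖f' x - f' x'‖ * ‖x' - x‖ :=
          real_inner_le_norm _ _
      _ ≤ (L * ‖x - x'‖) * ‖x' - x‖ :=
          mul_le_mul_of_nonneg_right (hlip x x') (norm_nonneg _)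
      _ = L * ‖x - x'‖ ^ 2 := by rw [norm_sub_rev x' x]; ring
  have hcs2 : ⟪z - z', x - x'⟫ ≤ ‖z - z'‖ * ‖x - x'‖ := real_inner_le_norm _ _
  rw [hexp] at hsum
  have hmain : (p - L) * ‖x - x'‖ ^ 2 ≤ p * (‖z - z'‖ * ‖x - x'‖) := by nlinarith
  rcases eq_or_lt_of_le (norm_nonneg (x - x')) with h0 | h0
  · rw [← h0]
    have hpl : 0 < p - L := by linarith
    have hp0 : 0 < p := by linarith
    positivity
  · have hpl : 0 < p - L := by linarith
    rw [div_mul_eq_mul_div, le_div_iff₀ hpl]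
    nlinarith
end

section
/- Let f : R^n → R be differentiable and L-smooth on a compact convex set C, p > L, and define v(z) := min_{x ∈ C} [f(x) + (p/2)‖x - z‖²] with minimizer x(z). Then v is differentiable with ∇v(z) = p(z - x(z)), and ∇v is Lipschitz continuous with constant p(p/(p-L) + 1) on C; consequently, for any z, z' ∈ C, v(z') - v(z) ≤ ⟨p(z - x(z)), z' - z⟩ + (p/2)(p/(p-L) + 1)‖z - z'‖². -/
/-!
An `L`-Lipschitz gradient gives the lower bound `f x + ⟪∇f x, u - x⟫ - L/2 ‖u - x‖² ≤ f u`, so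
the objective `u ↦ f u + p/2 ‖u - z‖²` is `(p - L)`-strongly convex. Together with the first-order
condition at the constrained minimizer `x(z)` this gives quadratic growth of rate `p - L` around
`x(z)`; adding the growth inequalities at `x(z)` and `x(z')` makes `x(·)` `p/(p-L)`-Lipschitz.
Evaluating the objective for `z'` at `x(z)` bounds `v z' - v z` from above by
`⟪p (z - x z), z' - z⟫ + p/2 ‖z' - z‖²`; exchanging `z` and `z'` and using that `z ↦ p (z - x z)` is
Lipschitz gives the matching lower bound, hence the gradient (Danskin).
-/

open scoped RealInnerProductSpace
open Set

section

variable {E : Type*} [NormedAddCommGroup E] [InnerProductSpace ℝ E]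

theorem HasGradientAt.hasDerivAt_comp_add_smul [CompleteSpace E] {f : E → ℝ} {g x d : E} {t : ℝ}
    (hf : HasGradientAt f g (x + t • d)) :
    HasDerivAt (fun s : ℝ => f (x + s • d)) ⟪g, d⟫ t := by
  have hline : HasDerivAt (fun s : ℝ => x + s • d) d t := by
    simpa using ((hasDerivAt_id t).smul_const d).const_add x
  simpa only [Function.comp_def, InnerProductSpace.toDual_apply_apply] using
    hf.hasFDerivAt.comp_hasDerivAt t hline

theorem add_inner_sub_sq_le_of_lipschitz_gradient [CompleteSpace E] {f : E → ℝ} {f' : E → E} {L : ℝ}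
    (hf : ∀ x, HasGradientAt f (f' x) x) (hf' : ∀ x y, ‖f' x - f' y‖ ≤ L * ‖x - y‖)
    (x y : E) : f x + ⟪f' x, y - x⟫ - L / 2 * ‖y - x‖ ^ 2 ≤ f y := by
  set d := y - x
  let φ : ℝ → ℝ := fun t => f (x + t • d) - t * ⟪f' x, d⟫ + L / 2 * t ^ 2 * ‖d‖ ^ 2
  have hφ : ∀ t : ℝ, HasDerivAt φ (⟪f' (x + t • d) - f' x, d⟫ + L * t * ‖d‖ ^ 2) t := by
    intro t
    refine ((((hf _).hasDerivAt_comp_add_smul).sub (hasDerivAt_mul_const ⟪f' x, d⟫)).add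
      (((hasDerivAt_pow 2 t).const_mul (L / 2)).mul_const (‖d‖ ^ 2))).congr_deriv ?_
    rw [inner_sub_left]; push_cast; ring
  have hφ' : ∀ t ∈ interior (Ici (0 : ℝ)), 0 ≤ ⟪f' (x + t • d) - f' x, d⟫ + L * t * ‖d‖ ^ 2 := by
    intro t ht
    rw [interior_Ici] at ht
    have := calc ⟪f' (x + t • d) - f' x, d⟫ ≥ -(‖f' (x + t • d) - f' x‖ * ‖d‖) :=
          neg_le_of_abs_le (abs_real_inner_le_norm _ _)
      _ ≥ -(L * ‖t • d‖ * ‖d‖) := by gcongr; simpa using hf' (x + t • d) x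
      _ = -(L * t * ‖d‖ ^ 2) := by rw [norm_smul, Real.norm_of_nonneg ht.le]; ring
    linarith
  have hmono : MonotoneOn φ (Ici 0) :=
    monotoneOn_of_hasDerivWithinAt_nonneg (convex_Ici 0)
      (fun t _ => (hφ t).continuousAt.continuousWithinAt)
      (fun t _ => (hφ t).hasDerivWithinAt) hφ'
  have hφ01 := hmono self_mem_Ici (by norm_num : (1 : ℝ) ∈ Ici 0) zero_le_one
  simp only [φ, zero_smul, add_zero, one_smul, d, add_sub_cancel] at hφ01
  linarith

theorem IsMinOn.add_sq_le_of_lipschitz_gradient [CompleteSpace E] {f : E → ℝ} {f' : E → E} {L p : ℝ}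
    {C : Set E} {x z u : E} (hf : ∀ x, HasGradientAt f (f' x) x)
    (hf' : ∀ x y, ‖f' x - f' y‖ ≤ L * ‖x - y‖) (hC : Convex ℝ C)
    (hmin : IsMinOn (fun u => f u + p / 2 * ‖u - z‖ ^ 2) C x) (hx : x ∈ C) (hu : u ∈ C) :
    f x + p / 2 * ‖x - z‖ ^ 2 + (p - L) / 2 * ‖u - x‖ ^ 2 ≤ f u + p / 2 * ‖u - z‖ ^ 2 := by
  have hderiv := (hf x).hasFDerivAt.add (((hasFDerivAt_id x).sub_const z).norm_sq.const_mul (p / 2))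
  have hopt := hmin.localize.hasFDerivWithinAt_nonneg hderiv.hasFDerivWithinAt
    (sub_mem_posTangentConeAt_of_segment_subset (hC.segment_subset hx hu))
  simp only [add_apply, InnerProductSpace.toDual_apply_apply,
    smul_apply, ContinuousLinearMap.comp_apply, innerSL_apply_apply, id,
    ContinuousLinearMap.id_apply, smul_eq_mul, nsmul_eq_mul, Nat.cast_ofNat] at hopt
  have hlow := add_inner_sub_sq_le_of_lipschitz_gradient hf hf' x u
  have hsplit : ‖u - z‖ ^ 2 = ‖x - z‖ ^ 2 + 2 * ⟪x - z, u - x⟫ + ‖u - x‖ ^ 2 := by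
    rw [← norm_add_sq_real, sub_add_sub_cancel']
  rw [hsplit]
  linear_combination hlow + hopt

theorem norm_sub_le_of_quadratic_growth {F : E → ℝ} {p μ : ℝ} (hp : 0 ≤ p) (hμ : 0 < μ)
    {x x' z z' : E}
    (h : F x + p / 2 * ‖x - z‖ ^ 2 + μ / 2 * ‖x' - x‖ ^ 2 ≤ F x' + p / 2 * ‖x' - z‖ ^ 2)
    (h' : F x' + p / 2 * ‖x' - z'‖ ^ 2 + μ / 2 * ‖x - x'‖ ^ 2 ≤ F x + p / 2 * ‖x - z'‖ ^ 2) :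
    ‖x - x'‖ ≤ p / μ * ‖z - z'‖ := by
  have hmono : μ * ‖x - x'‖ ^ 2 ≤ p * ⟪x - x', z - z'⟫ := by
    have hpar : p / 2 * (‖x' - z‖ ^ 2 - ‖x - z‖ ^ 2 + ‖x - z'‖ ^ 2 - ‖x' - z'‖ ^ 2)
        = p * ⟪x - x', z - z'⟫ := by
      simp only [norm_sub_sq_real, inner_sub_left, inner_sub_right]
      ring
    rw [norm_sub_rev x' x] at h
    linarith
  have hcs : μ * ‖x - x'‖ ^ 2 ≤ p * ‖z - z'‖ * ‖x - x'‖ := by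
    calc μ * ‖x - x'‖ ^ 2 ≤ p * ⟪x - x', z - z'⟫ := hmono
      _ ≤ p * (‖x - x'‖ * ‖z - z'‖) := by gcongr; exact real_inner_le_norm _ _
      _ = p * ‖z - z'‖ * ‖x - x'‖ := by ring
  rcases (norm_nonneg (x - x')).eq_or_lt with h0 | h0
  · rw [← h0]; positivity
  · rw [div_mul_eq_mul_div, le_div_iff₀ hμ]
    nlinarith

theorem norm_smul_sub_sub_smul_sub_le {p K : ℝ} (hp : 0 ≤ p) {x x' z z' : E}
    (h : ‖x - x'‖ ≤ K * ‖z - z'‖) :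
    ‖p • (z - x) - p • (z' - x')‖ ≤ p * (K + 1) * ‖z - z'‖ := by
  rw [← smul_sub, norm_smul, Real.norm_of_nonneg hp, mul_assoc]
  gcongr
  calc ‖z - x - (z' - x')‖ = ‖(z - z') - (x - x')‖ := by congr 1; abel
    _ ≤ ‖z - z'‖ + ‖x - x'‖ := norm_sub_le _ _
    _ ≤ (K + 1) * ‖z - z'‖ := by linarith

theorem envelope_sub_le {F : E → ℝ} {p : ℝ} {C : Set E} {xz : E → E} {v : E → ℝ}
    (hxz : ∀ z, xz z ∈ C ∧
      ∀ u ∈ C, F (xz z) + p / 2 * ‖xz z - z‖ ^ 2 ≤ F u + p / 2 * ‖u - z‖ ^ 2)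
    (hv : ∀ z, v z = F (xz z) + p / 2 * ‖xz z - z‖ ^ 2) (z z' : E) :
    v z' - v z ≤ ⟪p • (z - xz z), z' - z⟫ + p / 2 * ‖z' - z‖ ^ 2 := by
  have hle : v z' ≤ F (xz z) + p / 2 * ‖xz z - z'‖ ^ 2 := hv z' ▸ (hxz z').2 _ (hxz z).1
  have hpar : ‖xz z - z'‖ ^ 2 = ‖xz z - z‖ ^ 2 + 2 * ⟪z - xz z, z' - z⟫ + ‖z' - z‖ ^ 2 := by
    rw [show xz z - z' = (xz z - z) - (z' - z) by abel, norm_sub_sq_real, ← neg_sub z (xz z),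
      inner_neg_left]
    ring
  rw [hv z, real_inner_smul_left]
  linear_combination hle + p / 2 * hpar

theorem hasGradientAt_of_abs_sub_sub_inner_le [CompleteSpace E] {φ : E → ℝ} {g x : E} {c : ℝ}
    (h : ∀ y, |φ y - φ x - ⟪g, y - x⟫| ≤ c * ‖y - x‖ ^ 2) : HasGradientAt φ g x := by
  rw [hasGradientAt_iff_isLittleO]
  have hbig : (fun y => φ y - φ x - ⟪g, y - x⟫) =O[nhds x] (fun y => ‖y - x‖ ^ 2) :=
    .of_bound c (.of_forall fun y => by simpa using h y)
  have hsmall : (fun y => ‖y - x‖ ^ 2) =o[nhds x] (fun y => y - x) :=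
    (Asymptotics.isLittleO_norm_pow_id one_lt_two).comp_tendsto
      (tendsto_sub_nhds_zero_iff.2 Filter.tendsto_id)
  exact hbig.trans_isLittleO hsmall

theorem hasGradientAt_of_sub_le_inner_add_sq [CompleteSpace E] {φ : E → ℝ} {G : E → E} {c M : ℝ}
    (hup : ∀ x y, φ y - φ x ≤ ⟪G x, y - x⟫ + c * ‖y - x‖ ^ 2)
    (hG : ∀ x y, ‖G x - G y‖ ≤ M * ‖x - y‖) (x : E) : HasGradientAt φ (G x) x := by
  refine hasGradientAt_of_abs_sub_sub_inner_le (c := |c| + |M|) fun y => abs_le.2 ?_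
  have hc : c * ‖y - x‖ ^ 2 ≤ |c| * ‖y - x‖ ^ 2 := by gcongr; exact le_abs_self c
  have hM : 0 ≤ |M| * ‖y - x‖ ^ 2 := by positivity
  have hcs : -(|M| * ‖y - x‖ ^ 2) ≤ ⟪G y, y - x⟫ - ⟪G x, y - x⟫ := by
    calc -(|M| * ‖y - x‖ ^ 2) ≤ -(‖G y - G x‖ * ‖y - x‖) := by
          rw [sq, ← mul_assoc]; gcongr; exact (hG y x).trans (by gcongr; exact le_abs_self M)
      _ ≤ ⟪G y - G x, y - x⟫ := neg_le_of_abs_le (abs_real_inner_le_norm _ _)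
      _ = ⟪G y, y - x⟫ - ⟪G x, y - x⟫ := inner_sub_left _ _ _
  have hdown : φ x - φ y ≤ -⟪G y, y - x⟫ + c * ‖y - x‖ ^ 2 := by
    simpa only [← neg_sub y x, inner_neg_right, norm_neg] using hup y x
  constructor <;> linarith [hup x y]

end

theorem moreau_envelope_smooth_general
    {n : ℕ} (f : EuclideanSpace ℝ (Fin n) → ℝ)
    (f' : EuclideanSpace ℝ (Fin n) → EuclideanSpace ℝ (Fin n))
    (L p : ℝ) (hL : 0 ≤ L) (hp : L < p)
    (C : Set (EuclideanSpace ℝ (Fin n))) (hCconv : Convex ℝ C)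
    (hdiff : ∀ x, HasGradientAt f (f' x) x)
    (hlip : ∀ x x', ‖f' x - f' x'‖ ≤ L * ‖x - x'‖)
    (xz : EuclideanSpace ℝ (Fin n) → EuclideanSpace ℝ (Fin n))
    (v : EuclideanSpace ℝ (Fin n) → ℝ)
    (hxz : ∀ z, xz z ∈ C ∧
      ∀ u ∈ C, f (xz z) + p / 2 * ‖xz z - z‖ ^ 2 ≤ f u + p / 2 * ‖u - z‖ ^ 2)
    (hv : ∀ z, v z = f (xz z) + p / 2 * ‖xz z - z‖ ^ 2) :
    (∀ z ∈ C, HasGradientAt v (p • (z - xz z)) z) ∧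
    (∀ z ∈ C, ∀ z' ∈ C,
      ‖p • (z - xz z) - p • (z' - xz z')‖ ≤ p * (p / (p - L) + 1) * ‖z - z'‖) ∧
    (∀ z ∈ C, ∀ z' ∈ C,
      v z' - v z ≤ ⟪p • (z - xz z), z' - z⟫ + p / 2 * (p / (p - L) + 1) * ‖z - z'‖ ^ 2) := by
  have hp0 : 0 ≤ p := hL.trans hp.le
  have hgrowth : ∀ z, ∀ u ∈ C, f (xz z) + p / 2 * ‖xz z - z‖ ^ 2 + (p - L) / 2 * ‖u - xz z‖ ^ 2
      ≤ f u + p / 2 * ‖u - z‖ ^ 2 := fun z u hu =>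
    IsMinOn.add_sq_le_of_lipschitz_gradient hdiff hlip hCconv (isMinOn_iff.2 (hxz z).2)
      (hxz z).1 hu
  have hxlip : ∀ z z', ‖xz z - xz z'‖ ≤ p / (p - L) * ‖z - z'‖ := fun z z' =>
    norm_sub_le_of_quadratic_growth hp0 (sub_pos.2 hp) (hgrowth z _ (hxz z').1)
      (hgrowth z' _ (hxz z).1)
  have hgradlip : ∀ z z', ‖p • (z - xz z) - p • (z' - xz z')‖ ≤ p * (p / (p - L) + 1) * ‖z - z'‖ :=
    fun z z' => norm_smul_sub_sub_smul_sub_le hp0 (hxlip z z')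
  have hup := envelope_sub_le hxz hv
  refine ⟨fun z _ => hasGradientAt_of_sub_le_inner_add_sq hup hgradlip z,
    fun z _ z' _ => hgradlip z z', fun z _ z' _ => (hup z z').trans ?_⟩
  have hK : 0 ≤ p / (p - L) := div_nonneg hp0 (sub_pos.2 hp).le
  rw [norm_sub_rev z' z]
  gcongr
  exact le_mul_of_one_le_right (by positivity) (by linarith)

/-- Smoothness of the Moreau-envelope-type function `v(z) = min_{x ∈ C} [f(x) + (p/2)‖x-z‖²]`:
`∇v(z) = p(z - x(z))`, `∇v` is `p(p/(p-L) + 1)`-Lipschitz on `C`, and consequently the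
descent-type inequality holds on `C`. -/
theorem moreau_envelope_smooth
    {n : ℕ} (f : EuclideanSpace ℝ (Fin n) → ℝ)
    (f' : EuclideanSpace ℝ (Fin n) → EuclideanSpace ℝ (Fin n))
    (L p : ℝ) (hL : 0 ≤ L) (hp : L < p)
    (C : Set (EuclideanSpace ℝ (Fin n))) (hCcompact : IsCompact C) (hCconv : Convex ℝ C)
    (hdiff : ∀ x, HasGradientAt f (f' x) x)
    (hlip : ∀ x x', ‖f' x - f' x'‖ ≤ L * ‖x - x'‖)
    (xz : EuclideanSpace ℝ (Fin n) → EuclideanSpace ℝ (Fin n))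
    (v : EuclideanSpace ℝ (Fin n) → ℝ)
    (hxz : ∀ z, xz z ∈ C ∧
      ∀ u ∈ C, f (xz z) + p / 2 * ‖xz z - z‖ ^ 2 ≤ f u + p / 2 * ‖u - z‖ ^ 2)
    (hv : ∀ z, v z = f (xz z) + p / 2 * ‖xz z - z‖ ^ 2) :
    (∀ z ∈ C, HasGradientAt v (p • (z - xz z)) z) ∧
    (∀ z ∈ C, ∀ z' ∈ C,
      ‖p • (z - xz z) - p • (z' - xz z')‖ ≤ p * (p / (p - L) + 1) * ‖z - z'‖) ∧
    (∀ z ∈ C, ∀ z' ∈ C,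
      v z' - v z ≤ ⟪p • (z - xz z), z' - z⟫ + p / 2 * (p / (p - L) + 1) * ‖z - z'‖ ^ 2) :=
  moreau_envelope_smooth_general f f' L p hL hp C hCconv hdiff hlip xz v hxz hv
end

section
/- Let τ > 0. Given λ, λ' ∈ R_+^m with -λ' + λ + τ g ∈ N_{R_+^m}(λ') for some g ∈ R^m, and any h ∈ R^m, we have 2⟨λ' - λ, h - g⟩ + ⟨λ' - λ, g⟩ ≥ -τ‖h - g‖² + τ·dist²(h, N_{R_+^m}(λ')). -/
open scoped RealInnerProductSpace

/-- The normal cone of the nonnegative orthant `ℝ₊^m` at a point `lam ≥ 0`. -/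
def nonnegOrthantNormalCone {m : ℕ} (lam : EuclideanSpace ℝ (Fin m)) :
    Set (EuclideanSpace ℝ (Fin m)) :=
  {w | ∀ i, w i ≤ 0 ∧ (0 < lam i → w i = 0)}

/-- Given `λ, λ' ≥ 0` with `-λ' + λ + τg ∈ N_{ℝ₊^m}(λ')`, for any `h`,
`2⟨λ' - λ, h - g⟩ + ⟨λ' - λ, g⟩ ≥ -τ‖h - g‖² + τ·dist²(h, N_{ℝ₊^m}(λ'))`. -/
theorem dual_update_distance_bound
    {m : ℕ} (lam lam' g h : EuclideanSpace ℝ (Fin m)) (τ : ℝ) (hτ : 0 < τ)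
    (hlam_nonneg : ∀ i, 0 ≤ lam i)
    (hlam'_nonneg : ∀ i, 0 ≤ lam' i)
    (hmem : -lam' + lam + τ • g ∈ nonnegOrthantNormalCone lam') :
    2 * ⟪lam' - lam, h - g⟫ + ⟪lam' - lam, g⟫ ≥
      -τ * ‖h - g‖ ^ 2 + τ * (Metric.infDist h (nonnegOrthantNormalCone lam')) ^ 2 := by
  set N := nonnegOrthantNormalCone lam' with hN
  set v : EuclideanSpace ℝ (Fin m) := -lam' + lam + τ • g with hv
  have hvN : v ∈ N := hmem
  -- projection inequality
  have hsum : ⟪v, lam - lam'⟫ ≤ 0 := by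
    rw [PiLp.inner_apply]
    apply Finset.sum_nonpos
    intro i _
    rcases (hlam'_nonneg i).lt_or_eq with hpos | hzero
    · have h2 := (hvN i).2 hpos
      simp [h2]
    · have h1 := (hvN i).1
      have h3 : (lam - lam') i = lam i := by
        simp [← hzero]
      simp only [RCLike.inner_apply, conj_trivial, h3]
      exact mul_nonpos_of_nonneg_of_nonpos (hlam_nonneg i) h1
  -- membership of scaled v
  have hvN' : (τ⁻¹ : ℝ) • v ∈ N := by
    intro i
    have h1 := (hvN i).1
    have h2 := (hvN i).2
    constructor
    · simp only [PiLp.smul_apply, smul_eq_mul]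
      exact mul_nonpos_of_nonneg_of_nonpos (le_of_lt (inv_pos.mpr hτ)) h1
    · intro hp
      simp [h2 hp]
  have hd : Metric.infDist h N ≤ ‖h - (τ⁻¹ : ℝ) • v‖ := by
    simpa [dist_eq_norm] using Metric.infDist_le_dist_of_mem hvN'
  have hd0 : 0 ≤ Metric.infDist h N := Metric.infDist_nonneg
  -- key inequality: ‖u‖² ≤ τ⟨u,g⟩
  have hveq : v = τ • g - (lam' - lam) := by
    rw [hv]; abel
  have hsum' : ⟪τ • g - (lam' - lam), -(lam' - lam)⟫ ≤ 0 := by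
    have : lam - lam' = -(lam' - lam) := by abel
    rw [← this, ← hveq]; exact hsum
  have hkey : ‖lam' - lam‖ ^ 2 ≤ τ * ⟪lam' - lam, g⟫ := by
    have := hsum'
    rw [inner_neg_right, inner_sub_left, real_inner_smul_left,
      real_inner_self_eq_norm_sq] at this
    have hc : ⟪g, lam' - lam⟫ = ⟪lam' - lam, g⟫ := real_inner_comm _ _
    nlinarith [this]
  -- expansion
  have hrw : h - (τ⁻¹ : ℝ) • v = (h - g) + (τ⁻¹ : ℝ) • (lam' - lam) := by
    rw [hveq, smul_sub, smul_smul, inv_mul_cancel₀ (ne_of_gt hτ), one_smul]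
    abel
  have hexp : ‖h - (τ⁻¹ : ℝ) • v‖ ^ 2
      = ‖h - g‖ ^ 2 + 2 * τ⁻¹ * ⟪lam' - lam, h - g⟫ + τ⁻¹ ^ 2 * ‖lam' - lam‖ ^ 2 := by
    rw [hrw, norm_add_sq_real, real_inner_smul_right, norm_smul, real_inner_comm]
    simp [norm_inv, Real.norm_eq_abs, abs_of_pos hτ]
    ring
  have hdsq : (Metric.infDist h N) ^ 2 ≤ ‖h - (τ⁻¹ : ℝ) • v‖ ^ 2 := by
    nlinarith [hd, hd0]
  rw [hexp] at hdsq
  have hτi : τ * τ⁻¹ = 1 := mul_inv_cancel₀ (ne_of_gt hτ)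
  have h1 := mul_le_mul_of_nonneg_left hdsq hτ.le
  have h2 := mul_le_mul_of_nonneg_left hkey (inv_pos.mpr hτ).le
  have h3 : τ⁻¹ * (τ * ⟪lam' - lam, g⟫) = ⟪lam' - lam, g⟫ := by
    rw [← mul_assoc, inv_mul_cancel₀ (ne_of_gt hτ), one_mul]
  rw [h3] at h2
  have h4 : τ * (‖h - g‖ ^ 2 + 2 * τ⁻¹ * ⟪lam' - lam, h - g⟫ + τ⁻¹ ^ 2 * ‖lam' - lam‖ ^ 2)
      = τ * ‖h - g‖ ^ 2 + 2 * ⟪lam' - lam, h - g⟫ + τ⁻¹ * ‖lam' - lam‖ ^ 2 := by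
    field_simp
  rw [h4] at h1
  linarith
end

section
/- Let f be differentiable on a compact convex set C with ‖∇f(x)‖ ≤ B_f for all x ∈ C, and g_1,...,g_m convex differentiable with a Slater point x_s ∈ C satisfying g_i(x_s) < 0 for all i. Suppose (x*, λ*) with x* ∈ C, λ* ≥ 0 satisfies the KKT conditions: -∇f(x*) - Σ λ*_i ∇g_i(x*) ∈ N_C(x*), g_i(x*) ≤ 0, and λ*_i g_i(x*) = 0 for all i. Then ‖λ*‖₁ ≤ B_f · D_C / min_i(-g_i(x_s)), where D_C is the diameter of C. -/
open scoped RealInnerProductSpace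

/-- Bound on KKT multipliers under a Slater condition:
`‖λ*‖₁ ≤ B_f · D_C / minᵢ(-gᵢ(x_s))`. -/
theorem kkt_multiplier_bound
    {n m : ℕ} (f : EuclideanSpace ℝ (Fin n) → ℝ)
    (f' : EuclideanSpace ℝ (Fin n) → EuclideanSpace ℝ (Fin n))
    (g : Fin m → EuclideanSpace ℝ (Fin n) → ℝ)
    (g' : Fin m → EuclideanSpace ℝ (Fin n) → EuclideanSpace ℝ (Fin n))
    (C : Set (EuclideanSpace ℝ (Fin n))) (hCcompact : IsCompact C) (hCconv : Convex ℝ C)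
    (Bf D : ℝ)
    (hdiff : ∀ x, HasGradientAt f (f' x) x)
    (hBf : ∀ x ∈ C, ‖f' x‖ ≤ Bf)
    (hD : ∀ x ∈ C, ∀ y ∈ C, ‖x - y‖ ≤ D)
    (hgdiff : ∀ i x, HasGradientAt (g i) (g' i x) x)
    (hgconv : ∀ i x y, g i y ≥ g i x + ⟪g' i x, y - x⟫)
    (xs : EuclideanSpace ℝ (Fin n)) (hxs : xs ∈ C) (hslater : ∀ i, g i xs < 0)
    (hne : (Finset.univ : Finset (Fin m)).Nonempty)
    (xstar : EuclideanSpace ℝ (Fin n)) (hxstar : xstar ∈ C)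
    (lam : Fin m → ℝ) (hlam : ∀ i, 0 ≤ lam i)
    (ξ : EuclideanSpace ℝ (Fin n))
    (hstat : ξ = -f' xstar - ∑ i, lam i • g' i xstar)
    (hnc : ∀ y ∈ C, ⟪ξ, y - xstar⟫ ≤ 0)
    (hfeas : ∀ i, g i xstar ≤ 0)
    (hcs : ∀ i, lam i * g i xstar = 0) :
    ∑ i, lam i ≤ Bf * D / Finset.univ.inf' hne (fun i => -g i xs) := by
  set γ := Finset.univ.inf' hne (fun i => -g i xs) with hγ
  have hγpos : 0 < γ := by
    rw [hγ, Finset.lt_inf'_iff]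
    intro i _
    linarith [hslater i]
  set v := xs - xstar with hv
  -- each term bound
  have h1 : ∀ i, lam i * ⟪g' i xstar, v⟫ ≤ lam i * g i xs := by
    intro i
    have := hgconv i xstar xs
    have h2 : g i xstar + ⟪g' i xstar, v⟫ ≤ g i xs := this
    have := mul_le_mul_of_nonneg_left h2 (hlam i)
    have hc := hcs i
    nlinarith
  have hsum : ⟪(∑ i, lam i • g' i xstar : EuclideanSpace ℝ (Fin n)), v⟫ ≤ ∑ i, lam i * g i xs := by
    rw [sum_inner]
    apply Finset.sum_le_sum
    intro i _
    rw [real_inner_smul_left]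
    exact h1 i
  -- lower bound for LHS
  have hξ : ⟪ξ, v⟫ ≤ 0 := hnc xs hxs
  have hstat' : (∑ i, lam i • g' i xstar : EuclideanSpace ℝ (Fin n)) = -f' xstar - ξ := by
    rw [hstat]; abel
  have hCS : ⟪f' xstar, v⟫ ≤ Bf * D := by
    calc ⟪f' xstar, v⟫ ≤ ‖f' xstar‖ * ‖v‖ := real_inner_le_norm _ _
    _ ≤ Bf * D := by
        apply mul_le_mul (hBf xstar hxstar) (hD xs hxs xstar hxstar) (norm_nonneg _)
        exact le_trans (norm_nonneg _) (hBf xstar hxstar)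
  have hlow : -(Bf * D) ≤ ⟪(∑ i, lam i • g' i xstar : EuclideanSpace ℝ (Fin n)), v⟫ := by
    rw [hstat']
    have : ⟪(-f' xstar - ξ : EuclideanSpace ℝ (Fin n)), v⟫ = -⟪f' xstar, v⟫ - ⟪ξ, v⟫ := by
      simp [inner_sub_left, inner_neg_left]
    rw [this]
    linarith
  -- upper bound ∑ λ g xs ≤ -γ ∑ λ
  have hub : ∑ i, lam i * g i xs ≤ -γ * ∑ i, lam i := by
    rw [Finset.mul_sum]
    apply Finset.sum_le_sum
    intro i _
    have hgi : γ ≤ -g i xs := Finset.inf'_le _ (Finset.mem_univ i)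
    have := mul_le_mul_of_nonneg_left hgi (hlam i)
    nlinarith
  have key : γ * ∑ i, lam i ≤ Bf * D := by nlinarith
  rw [le_div_iff₀ hγpos]
  linarith
end

section
/- Let λ ≥ 0, λ(z) ≥ 0 in R^m and g ∈ R^m. Then ⟨λ(z) - λ, g⟩ ≤ ‖λ(z) - λ‖ · dist(g, N_{R_+^m}(λ)). -/
open scoped RealInnerProductSpace

/-! `λ(z) - λ` makes a nonpositive inner product with every normal vector `v` at `λ`, so
`⟪λ(z) - λ, g⟫ ≤ ⟪λ(z) - λ, g - v⟫ ≤ ‖λ(z) - λ‖ · ‖g - v‖` by Cauchy–Schwarz; now take the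
infimum over `v`. -/

theorem inner_le_norm_mul_infDist_of_inner_nonpos {E : Type*} [NormedAddCommGroup E]
    [InnerProductSpace ℝ E] {s : Set E} (hs : s.Nonempty) {d : E} (hd : ∀ v ∈ s, ⟪d, v⟫ ≤ 0)
    (g : E) : ⟪d, g⟫ ≤ ‖d‖ * Metric.infDist g s := by
  rw [Metric.infDist_eq_iInf, Real.mul_iInf_of_nonneg (norm_nonneg d)]
  have : Nonempty s := hs.to_subtype
  refine le_ciInf fun v => ?_
  calc ⟪d, g⟫ = ⟪d, g - v⟫ + ⟪d, v⟫ := by rw [← inner_add_right, sub_add_cancel]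
    _ ≤ ⟪d, g - v⟫ := add_le_of_nonpos_right (hd v v.2)
    _ ≤ ‖d‖ * ‖g - v‖ := real_inner_le_norm _ _
    _ = ‖d‖ * dist g v := by rw [dist_eq_norm]

theorem zero_mem_nonnegOrthantNormalCone {m : ℕ} (lam : EuclideanSpace ℝ (Fin m)) :
    0 ∈ nonnegOrthantNormalCone lam :=
  fun _ => ⟨le_rfl, fun _ => rfl⟩

theorem inner_sub_nonpos_of_mem_nonnegOrthantNormalCone {m : ℕ}
    {lam lamz v : EuclideanSpace ℝ (Fin m)} (hlamz : ∀ i, 0 ≤ lamz i)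
    (hv : v ∈ nonnegOrthantNormalCone lam) : ⟪lamz - lam, v⟫ ≤ 0 := by
  rw [PiLp.inner_apply]
  refine Finset.sum_nonpos fun i _ => ?_
  rw [Real.inner_apply, PiLp.sub_apply]
  by_cases hpos : 0 < lam i
  · simp [(hv i).2 hpos]
  · exact mul_nonpos_of_nonneg_of_nonpos (by linarith [hlamz i]) (hv i).1

theorem inner_le_norm_mul_dist_normal_cone_general
    {m : ℕ} (lam lamz g : EuclideanSpace ℝ (Fin m))
    (hlamz : ∀ i, 0 ≤ lamz i) :
    ⟪lamz - lam, g⟫ ≤ ‖lamz - lam‖ * Metric.infDist g (nonnegOrthantNormalCone lam) :=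
  inner_le_norm_mul_infDist_of_inner_nonpos ⟨0, zero_mem_nonnegOrthantNormalCone lam⟩
    (fun _ hv => inner_sub_nonpos_of_mem_nonnegOrthantNormalCone hlamz hv) g

/-- `⟨λ(z) - λ, g⟩ ≤ ‖λ(z) - λ‖ · dist(g, N_{ℝ₊^m}(λ))` for `λ, λ(z) ≥ 0`. -/
theorem inner_le_norm_mul_dist_normal_cone
    {m : ℕ} (lam lamz g : EuclideanSpace ℝ (Fin m))
    (hlam : ∀ i, 0 ≤ lam i) (hlamz : ∀ i, 0 ≤ lamz i) :
    ⟪lamz - lam, g⟫ ≤ ‖lamz - lam‖ * Metric.infDist g (nonnegOrthantNormalCone lam) :=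
  inner_le_norm_mul_dist_normal_cone_general lam lamz g hlamz
end
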